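/- For n ≥ 2 and 0 ≤ p ≤ n−2, every element of IC_n of height p is a finite product of elements of IC_n of height p+1. -/

import Mathlib

open scoped Classical

namespace ICCatalan

/-- Partial injective transformations on `Fin n` (representing the chain `[n] = {1,…,n}`). -/
abbrev PT (n : ℕ) := Fin n ≃. Fin n

/-- Composition (left-to-right, `x(αβ) = (xα)β`) makes `PT n` a monoid. -/
noncomputable instance instMonoidPT (n : ℕ) : Monoid (PT n) where
  mul f g := f.trans g
  one := PEquiv.refl (Fin n)
  mul_assoc := PEquiv.trans_assoc
  one_mul := PEquiv.refl_trans
  mul_one := PEquiv.trans_refl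

lemma mul_def {n : ℕ} (f g : PT n) : f * g = f.trans g := rfl

/-- The domain of a partial transformation. -/
def pdom {n : ℕ} (f : PT n) : Set (Fin n) := {x | ∃ y, f x = some y}

/-- The image of a partial transformation. -/
def pim {n : ℕ} (f : PT n) : Set (Fin n) := {y | ∃ x, f x = some y}

/-- The height `|im f|` of a partial transformation. -/
noncomputable def height {n : ℕ} (f : PT n) : ℕ := (pim f).ncard

/-- `f` is order-decreasing: `xf ≤ x` on the domain. -/
def IsDecr {n : ℕ} (f : PT n) : Prop := ∀ x y : Fin n, f x = some y → y ≤ x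

/-- `f` is isotone: `x ≤ y` implies `xf ≤ yf` on the domain. -/
def IsIso {n : ℕ} (f : PT n) : Prop :=
  ∀ x₁ x₂ y₁ y₂ : Fin n, f x₁ = some y₁ → f x₂ = some y₂ → x₁ ≤ x₂ → y₁ ≤ y₂

/-- The injective partial Catalan monoid `IC_n`: all isotone order-decreasing
partial injective transformations of `[n]`. -/
def IC (n : ℕ) : Set (PT n) := {f | IsIso f ∧ IsDecr f}

/-- `Q'_n = {α ∈ IC_n : 1 ∉ dom α}` (the least element of `Fin n` plays the role of `1 ∈ [n]`). -/
def Qp (n : ℕ) : Set (PT n) := {f | f ∈ IC n ∧ ∀ x : Fin n, (x : ℕ) = 0 → f x = none}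

/-- `S¹ : S` with an identity adjoined (realized inside `PT n`). -/
def SOne {n : ℕ} (S : Set (PT n)) : Set (PT n) := S ∪ {1}

/-- The starred Green relation `L*` of the subsemigroup `S`. -/
def LStar {n : ℕ} (S : Set (PT n)) (a b : PT n) : Prop :=
  ∀ x ∈ SOne S, ∀ y ∈ SOne S, (a * x = a * y ↔ b * x = b * y)

/-- The starred Green relation `R*` of the subsemigroup `S`. -/
def RStar {n : ℕ} (S : Set (PT n)) (a b : PT n) : Prop :=
  ∀ x ∈ SOne S, ∀ y ∈ SOne S, (x * a = y * a ↔ x * b = y * b)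

/-- The starred Green relation `H* = L* ∩ R*`. -/
def HStar {n : ℕ} (S : Set (PT n)) (a b : PT n) : Prop :=
  LStar S a b ∧ RStar S a b

/-- The partial identity on a subset `A` of `[n]`. -/
noncomputable def pid {n : ℕ} (A : Set (Fin n)) : PT n := PEquiv.ofSet A

/-- An essential element: exactly one point `y` of the domain is moved, and `yf = y - 1`. -/
def IsEssential {n : ℕ} (f : PT n) : Prop :=
  ∃ y z : Fin n, f y = some z ∧ (z : ℕ) + 1 = (y : ℕ) ∧
    ∀ x w : Fin n, f x = some w → w ≠ x → x = y

/-- The shift of `f`: the number of non-fixed points of its domain. -/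
noncomputable def shift {n : ℕ} (f : PT n) : ℕ := {x : Fin n | ∃ w, f x = some w ∧ w ≠ x}.ncard

/-!
Induction on the sum of the points of the domain. If `α ∈ IC n` moves no point, it is the
partial identity `id_A` on its domain `A`, and `id_A = id_{A ∪ {s}} * id_{A ∪ {w}}` for any two
distinct `s, w ∉ A`, which exist because `|A| ≤ n - 2`. Otherwise let `d` be the least moved
point: then `c = d - 1 ∉ A`, and with `τ` the transposition `(c d)`,
`α = (id_A * τ) * (τ * α)`. The factor `τ * α` is again in `IC n`, of the same height, and its
domain `τ(A)` has a smaller sum, while `id_A * τ = id_{A ∪ {s}} * (id_{A ∪ {w}} * τ)` for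
distinct `s, w ∉ A` with `w ≠ c` is a product of two elements of height `|A| + 1`.
-/

section Development

variable {n : ℕ}

lemma mul_apply (f g : PT n) (x : Fin n) : (f * g) x = (f x).bind g := rfl

lemma pid_apply (A : Set (Fin n)) (x : Fin n) :
    pid A x = if x ∈ A then some x else none := rfl

lemma pid_mul_pid (A B : Set (Fin n)) : pid A * pid B = pid (A ∩ B) := by
  refine PEquiv.ext fun x => ?_
  by_cases hA : x ∈ A <;> by_cases hB : x ∈ B <;> simp [mul_apply, pid_apply, hA, hB]

lemma pid_pdom_mul (f : PT n) : pid (pdom f) * f = f := by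
  refine PEquiv.ext fun x => ?_
  rcases hx : f x with _ | y
  · simp [mul_apply, pid_apply, hx]
  · simp [mul_apply, pid_apply, hx, pdom]

lemma swap_mul_swap (c d : Fin n) :
    (Equiv.swap c d).toPEquiv * (Equiv.swap c d).toPEquiv = (1 : PT n) := by
  rw [mul_def, ← Equiv.toPEquiv_trans, Equiv.swap_swap, Equiv.toPEquiv_refl]
  rfl

lemma ncard_pdom (f : PT n) : (pdom f).ncard = height f := by
  refine Set.ncard_congr (fun x hx => (f x).get (Option.isSome_iff_exists.mpr hx))
    (fun x _ => ⟨x, by simp⟩) (fun x₁ x₂ h₁ h₂ h => ?_)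
    (fun y ⟨x, hx⟩ => ⟨x, ⟨y, hx⟩, by simp [hx]⟩)
  have h₂ := Option.get_mem (Option.isSome_iff_exists.mpr h₂)
  rw [← h] at h₂
  exact f.inj (Option.get_mem _) h₂

lemma height_pid (A : Set (Fin n)) : height (pid A) = A.ncard := by
  rw [height]
  congr 1
  ext y
  simp [pim, pid_apply]

lemma height_pid_mul_perm (A : Set (Fin n)) (σ : Equiv.Perm (Fin n)) :
    height (pid A * σ.toPEquiv) = A.ncard := by
  have : pim (pid A * σ.toPEquiv) = σ '' A := by
    ext y
    simp only [pim, mul_apply, pid_apply, Set.mem_image]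
    constructor
    · rintro ⟨x, hx⟩
      split_ifs at hx with h
      · exact ⟨x, h, by simpa using hx⟩
      · simp at hx
    · rintro ⟨x, h, rfl⟩
      exact ⟨x, by simp [h]⟩
  rw [height, this, Set.ncard_image_of_injective _ σ.injective]

lemma height_perm_mul (σ : Equiv.Perm (Fin n)) (f : PT n) :
    height (σ.toPEquiv * f) = height f := by
  have : pim (σ.toPEquiv * f) = pim f := by
    ext y
    simp only [pim, mul_apply, Equiv.toPEquiv_apply, Option.bind_some]
    exact ⟨fun ⟨x, hx⟩ => ⟨σ x, hx⟩, fun ⟨x, hx⟩ => ⟨σ.symm x, by simpa using hx⟩⟩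
  rw [height, this, height]

lemma pid_mem_IC (A : Set (Fin n)) : pid A ∈ IC n := by
  refine ⟨fun x₁ x₂ y₁ y₂ h₁ h₂ hle => ?_, fun x y h => ?_⟩
  · simp only [pid, PEquiv.ofSet_eq_some_iff] at h₁ h₂
    rwa [h₁.1, h₂.1]
  · simp only [pid, PEquiv.ofSet_eq_some_iff] at h
    exact h.1 ▸ le_rfl

lemma exists_notMem_of_ncard_lt {A : Set (Fin n)} (h : A.ncard < n) : ∃ s, s ∉ A := by
  by_contra! hA
  rw [Set.eq_univ_of_forall hA, Set.ncard_univ, Nat.card_eq_fintype_card, Fintype.card_fin] at h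
  exact lt_irrefl n h

end Development

section Swap

variable {n : ℕ} {c d : Fin n}

lemma swap_monotoneOn_compl_left (hcd : (c : ℕ) + 1 = d) :
    MonotoneOn (Equiv.swap c d) {c}ᶜ := by
  intro x hx y hy hxy
  simp only [Set.mem_compl_iff, Set.mem_singleton_iff] at hx hy
  simp only [Equiv.swap_apply_def, Fin.le_def, Fin.ext_iff] at *
  split_ifs <;> omega

lemma swap_monotoneOn_compl_right (hcd : (c : ℕ) + 1 = d) :
    MonotoneOn (Equiv.swap c d) {d}ᶜ := by
  intro x hx y hy hxy
  simp only [Set.mem_compl_iff, Set.mem_singleton_iff] at hx hy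
  simp only [Equiv.swap_apply_def, Fin.le_def, Fin.ext_iff] at *
  split_ifs <;> omega

lemma swap_le_self (hcd : (c : ℕ) + 1 = d) {x : Fin n} (hx : x ≠ c) : Equiv.swap c d x ≤ x := by
  simp only [Equiv.swap_apply_def, Fin.le_def, ne_eq, Fin.ext_iff] at *
  split_ifs <;> omega

lemma pid_mul_swap_mem_IC (hcd : (c : ℕ) + 1 = d) {A : Set (Fin n)} (hc : c ∉ A) :
    pid A * (Equiv.swap c d).toPEquiv ∈ IC n := by
  have hA : ∀ {x y}, (pid A * (Equiv.swap c d).toPEquiv) x = some y →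
      x ∈ A ∧ Equiv.swap c d x = y := by
    intro x y h
    rw [mul_apply, pid_apply] at h
    split_ifs at h with hx
    · simpa [hx] using h
    · cases h
  refine ⟨fun x₁ x₂ y₁ y₂ h₁ h₂ hle => ?_, fun x y h => ?_⟩
  · obtain ⟨hx₁, rfl⟩ := hA h₁
    obtain ⟨hx₂, rfl⟩ := hA h₂
    exact swap_monotoneOn_compl_left hcd (fun h => hc (h ▸ hx₁)) (fun h => hc (h ▸ hx₂)) hle
  · obtain ⟨hx, rfl⟩ := hA h
    exact swap_le_self hcd (fun h => hc (h ▸ hx))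

lemma swap_mul_mem_IC (hcd : (c : ℕ) + 1 = d) {α : PT n} (hα : α ∈ IC n) (hc : α c = none)
    {e : Fin n} (hd : α d = some e) (hec : e ≤ c) :
    (Equiv.swap c d).toPEquiv * α ∈ IC n := by
  have hne : ∀ {x y}, α (Equiv.swap c d x) = some y → x ≠ d := by
    rintro x y h rfl
    rw [Equiv.swap_apply_right, hc] at h
    cases h
  refine ⟨fun x₁ x₂ y₁ y₂ h₁ h₂ hle => ?_, fun x y h => ?_⟩
  · rw [mul_apply, Equiv.toPEquiv_apply, Option.bind_some] at h₁ h₂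
    exact hα.1 _ _ _ _ h₁ h₂ (swap_monotoneOn_compl_right hcd (hne h₁) (hne h₂) hle)
  · rw [mul_apply, Equiv.toPEquiv_apply, Option.bind_some] at h
    by_cases hxc : x = c
    · subst hxc
      rw [Equiv.swap_apply_left, hd] at h
      exact Option.some_injective _ h ▸ hec
    · rw [Equiv.swap_apply_of_ne_of_ne hxc (hne h)] at h
      exact hα.2 x y h

end Swap

section Descent

variable {n : ℕ}

def domSum (f : PT n) : ℕ := ∑ x, if (f x).isSome then (x : ℕ) else 0

lemma domSum_swap_mul_lt {c d : Fin n} (hcd : (c : ℕ) + 1 = d) {α : PT n} (hc : α c = none)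
    (hd : (α d).isSome) : domSum ((Equiv.swap c d).toPEquiv * α) < domSum α := by
  set τ := Equiv.swap c d
  have hreindex : domSum (τ.toPEquiv * α) = ∑ y, if (α y).isSome then (τ y : ℕ) else 0 := by
    rw [domSum, ← Equiv.sum_comp τ]
    simp [τ, mul_apply, Equiv.swap_apply_self]
  rw [hreindex, domSum]
  refine Finset.sum_lt_sum (fun y _ => ?_) ⟨d, Finset.mem_univ _, ?_⟩
  · split_ifs with hy
    · have hyc : y ≠ c := by rintro rfl; simp [hc] at hy
      exact Fin.le_def.mp (swap_le_self hcd hyc)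
    · exact le_rfl
  · simp only [hd, if_true, τ, Equiv.swap_apply_right]
    omega

lemma exists_pred_notMem_pdom_of_moved {α : PT n} (hα : IsIso α)
    (hmoved : ∃ x y, α x = some y ∧ y < x) :
    ∃ c d e : Fin n, (c : ℕ) + 1 = d ∧ α c = none ∧ α d = some e ∧ e ≤ c := by
  obtain ⟨d, ⟨e, hde, hed⟩, hmin⟩ := exists_minimal_of_wellFoundedLT _ hmoved
  have hed' := Fin.lt_def.mp hed
  set c : Fin n := ⟨d - 1, by omega⟩
  have hcd : c < d := Fin.lt_def.mpr (by simp only [c]; omega)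
  refine ⟨c, d, e, by simp only [c]; omega, ?_, hde, Fin.le_def.mpr (by simp only [c]; omega)⟩
  rcases hc : α c with _ | w
  · rfl
  · have hwe : w < e := (hα c d w e hc hde hcd.le).lt_of_ne fun hw =>
      hcd.ne (α.inj (hw ▸ hc : e ∈ α c) hde)
    exact absurd (hmin ⟨w, hc, Fin.lt_def.mpr (by simp only [c] at *; omega)⟩ hcd.le) hcd.not_ge

lemma eq_pid_pdom_of_not_moved {α : PT n} (hα : IsDecr α)
    (hfix : ∀ x y, α x = some y → ¬ y < x) : α = pid (pdom α) := by
  refine PEquiv.ext fun x => ?_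
  rcases hx : α x with _ | y
  · simp [pid_apply, pdom, hx]
  · have hyx : y = x := le_antisymm (hα x y hx) (not_lt.mp (hfix x y hx))
    simp [pid_apply, pdom, hx, hyx]

end Descent

section Generation

variable {n : ℕ}

def ICHeight (n k : ℕ) : Set (PT n) := {β | β ∈ IC n ∧ height β = k}

lemma pid_eq_pid_insert_mul_pid_insert (A : Set (Fin n)) {s w : Fin n} (hsw : s ≠ w) :
    pid A = pid (insert s A) * pid (insert w A) := by
  rw [pid_mul_pid]
  congr 1
  ext x
  simp only [Set.mem_inter_iff, Set.mem_insert_iff]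
  grind

lemma pid_insert_mem_ICHeight {A : Set (Fin n)} {w : Fin n} (hw : w ∉ A) :
    pid (insert w A) ∈ ICHeight n (A.ncard + 1) :=
  ⟨pid_mem_IC _, by rw [height_pid, Set.ncard_insert_of_notMem hw]⟩

lemma pid_mem_closure {A : Set (Fin n)} (hA : A.ncard + 2 ≤ n) :
    pid A ∈ Subsemigroup.closure (ICHeight n (A.ncard + 1)) := by
  obtain ⟨w, hw⟩ := exists_notMem_of_ncard_lt (A := A) (by omega)
  obtain ⟨s, hs⟩ := exists_notMem_of_ncard_lt (A := insert w A) (by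
    have := Set.ncard_insert_le w A; omega)
  rw [Set.mem_insert_iff, not_or] at hs
  rw [pid_eq_pid_insert_mul_pid_insert A hs.1]
  exact mul_mem (Subsemigroup.subset_closure (pid_insert_mem_ICHeight hs.2))
    (Subsemigroup.subset_closure (pid_insert_mem_ICHeight hw))

lemma pid_mul_swap_mem_closure {A : Set (Fin n)} (hA : A.ncard + 2 ≤ n) {c d : Fin n}
    (hcd : (c : ℕ) + 1 = d) (hc : c ∉ A) :
    pid A * (Equiv.swap c d).toPEquiv ∈ Subsemigroup.closure (ICHeight n (A.ncard + 1)) := by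
  obtain ⟨w, hw⟩ := exists_notMem_of_ncard_lt (A := insert c A) (by
    have := Set.ncard_insert_le c A; omega)
  obtain ⟨s, hs⟩ := exists_notMem_of_ncard_lt (A := insert w A) (by
    have := Set.ncard_insert_le w A; omega)
  rw [Set.mem_insert_iff, not_or] at hw hs
  have hfactor : pid (insert w A) * (Equiv.swap c d).toPEquiv ∈ ICHeight n (A.ncard + 1) :=
    ⟨pid_mul_swap_mem_IC hcd (by simp [Ne.symm hw.1, hc]),
      by rw [height_pid_mul_perm, Set.ncard_insert_of_notMem hw.2]⟩
  rw [pid_eq_pid_insert_mul_pid_insert A hs.1, mul_assoc]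
  exact mul_mem (Subsemigroup.subset_closure (pid_insert_mem_ICHeight hs.2))
    (Subsemigroup.subset_closure hfactor)

theorem mem_closure_ICHeight_succ {p : ℕ} (hp : p + 2 ≤ n) {α : PT n} (hα : α ∈ IC n)
    (hh : height α = p) : α ∈ Subsemigroup.closure (ICHeight n (p + 1)) := by
  induction hs : domSum α using Nat.strong_induction_on generalizing α with
  | _ s ih =>
  have hdom : (pdom α).ncard = p := (ncard_pdom α).trans hh
  by_cases hmoved : ∃ x y, α x = some y ∧ y < x
  · obtain ⟨c, d, e, hcd, hc, hd, hec⟩ := exists_pred_notMem_pdom_of_moved hα.1 hmoved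
    set τ := (Equiv.swap c d).toPEquiv
    have hfactor : α = (pid (pdom α) * τ) * (τ * α) := by
      rw [mul_assoc, ← mul_assoc τ, swap_mul_swap, one_mul, pid_pdom_mul]
    rw [hfactor]
    refine mul_mem ?_
      (ih _ ?_ (swap_mul_mem_IC hcd hα hc hd hec) ((height_perm_mul _ α).trans hh) rfl)
    · exact hdom ▸ pid_mul_swap_mem_closure (hdom ▸ hp) hcd (by simp [pdom, hc])
    · exact hs ▸ domSum_swap_mul_lt hcd hc (by simp [hd])
  · rw [eq_pid_pdom_of_not_moved hα.2 fun x y h hyx => hmoved ⟨x, y, h, hyx⟩]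
    exact hdom ▸ pid_mem_closure (hdom ▸ hp)

end Generation

/-- for `n ≥ 2` and `0 ≤ p ≤ n-2`, every element of `IC_n` of height `p`
is a finite product of elements of `IC_n` of height `p+1`. -/
theorem stmt16 (n p : ℕ) (hn : 2 ≤ n) (hp : p ≤ n - 2) :
    ∀ α ∈ IC n, height α = p →
      α ∈ Subsemigroup.closure {β : PT n | β ∈ IC n ∧ height β = p + 1} :=
  fun _ hα hh => mem_closure_ICHeight_succ (by omega) hα hh

end ICCatalan
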